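/- Let A, B, C, D ∈ ℝ² with no three collinear. Let h be a conic through A, B, C, D with a center O and an axis with direction u ≠ 0, meaning B_h(u, u⊥) = 0 where u⊥ = (−u₂, u₁). Let M = O + s·u for some s ∈ ℝ and let ℓ = {M + t·u⊥ : t ∈ ℝ} be the line through M perpendicular to the axis, containing none of A, B, C, D. Suppose some conic G through A, B, C, D, given by a polynomial not proportional to that of h, meets ℓ in exactly two points P ≠ Q with M = (P + Q)/2. Then every conic through A, B, C, D meets ℓ either in the empty set, or exactly in {M}, or exactly in a pair of distinct points whose midpoint is M. -/

import Mathlib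

/-! Parametrise `ℓ` as `M + t • v` with `v = u⊥`. A conic `f` restricts to
`B_f(v, v) t² + ∂ᵥf(M) t + f(M)`, so its trace on `ℓ` is symmetric about `M` as soon as the
directional derivative `∂ᵥf(M)` vanishes, and this derivative is linear in the coefficients of `f`.
It vanishes for `h`, since `∇h(O) = 0` and moving along the axis changes it by `2 s B_h(u, v) = 0`,
and for `G`, which has the two zeros `M ± t v` on `ℓ`. As no three base points are collinear, the
conics through them form the pencil spanned by `h` and `G`, so `∂ᵥf(M) = 0` for every such `f`.
The trace is then empty, `{M}` or a symmetric pair, unless `f` vanishes on all of `ℓ`; but then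
`f` is `ℓ` times a line through three non-collinear base points, which is impossible. -/

/-- A conic (possibly degenerate) in the affine plane `ℝ × ℝ`, given by the six
coefficients of a polynomial `a·x² + b·x·y + c·y² + d·x + e·y + g`. -/
structure Conic where
  a : ℝ
  b : ℝ
  c : ℝ
  d : ℝ
  e : ℝ
  g : ℝ

/-- Evaluation of the defining polynomial of a conic at a point of `ℝ × ℝ`. -/
def Conic.eval (f : Conic) (p : ℝ × ℝ) : ℝ :=
  f.a * p.1 ^ 2 + f.b * p.1 * p.2 + f.c * p.2 ^ 2 + f.d * p.1 + f.e * p.2 + f.g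

/-- The defining polynomial is nonzero. -/
def Conic.Nonzero (f : Conic) : Prop :=
  ¬ (f.a = 0 ∧ f.b = 0 ∧ f.c = 0 ∧ f.d = 0 ∧ f.e = 0 ∧ f.g = 0)

/-- The conic passes through the four points `A`, `B`, `C`, `D`. -/
def Conic.Through (f : Conic) (A B C D : ℝ × ℝ) : Prop :=
  f.eval A = 0 ∧ f.eval B = 0 ∧ f.eval C = 0 ∧ f.eval D = 0

/-- No three of the four points `A`, `B`, `C`, `D` are collinear. -/
def NoThreeCollinear (A B C D : ℝ × ℝ) : Prop :=
  ¬ Collinear ℝ ({A, B, C} : Set (ℝ × ℝ)) ∧ ¬ Collinear ℝ ({A, B, D} : Set (ℝ × ℝ)) ∧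
  ¬ Collinear ℝ ({A, C, D} : Set (ℝ × ℝ)) ∧ ¬ Collinear ℝ ({B, C, D} : Set (ℝ × ℝ))

/-- The line through `M` with direction `u`. -/
def parmLine (M u : ℝ × ℝ) : Set (ℝ × ℝ) :=
  {p | ∃ t : ℝ, p = M + t • u}

/-- The polynomial of `f` is proportional to that of `h`. -/
def Conic.PropTo (f h : Conic) : Prop :=
  ∃ k : ℝ, f.a = k * h.a ∧ f.b = k * h.b ∧ f.c = k * h.c ∧
    f.d = k * h.d ∧ f.e = k * h.e ∧ f.g = k * h.g

/-- The polar bilinear form of the quadratic part of `f`: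
`B_f(u, w) = a·u₁·w₁ + (b/2)·(u₁·w₂ + u₂·w₁) + c·u₂·w₂`. -/
noncomputable def Conic.polarForm (f : Conic) (u w : ℝ × ℝ) : ℝ :=
  f.a * u.1 * w.1 + (f.b / 2) * (u.1 * w.2 + u.2 * w.1) + f.c * u.2 * w.2

/-- `O` is a center of the conic `f`. -/
def Conic.IsCenter (f : Conic) (O : ℝ × ℝ) : Prop :=
  ∀ w : ℝ × ℝ, f.eval (O + w) = f.eval (O - w)

def cross (p q : ℝ × ℝ) : ℝ := p.1 * q.2 - p.2 * q.1

lemma sq_add_sq_ne_zero_of_ne_zero {v : ℝ × ℝ} (hv : v ≠ 0) : v.1 ^ 2 + v.2 ^ 2 ≠ 0 := by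
  have : v.1 ≠ 0 ∨ v.2 ≠ 0 := by
    by_contra! h
    exact hv (Prod.ext h.1 h.2)
  rcases this with h | h <;> positivity

lemma mem_parmLine_of_cross_eq_zero {M v z : ℝ × ℝ} (hv : v ≠ 0) (h : cross (z - M) v = 0) :
    z ∈ parmLine M v := by
  have hN := sq_add_sq_ne_zero_of_ne_zero hv
  simp only [cross, Prod.fst_sub, Prod.snd_sub] at h
  refine ⟨((z.1 - M.1) * v.1 + (z.2 - M.2) * v.2) / (v.1 ^ 2 + v.2 ^ 2), Prod.ext ?_ ?_⟩
  · simp only [Prod.fst_add, Prod.smul_fst, smul_eq_mul]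
    field_simp
    linear_combination v.2 * h
  · simp only [Prod.snd_add, Prod.smul_snd, smul_eq_mul]
    field_simp
    linear_combination -v.1 * h

lemma collinear_of_subset_parmLine {s : Set (ℝ × ℝ)} {M v : ℝ × ℝ} (h : s ⊆ parmLine M v) :
    Collinear ℝ s :=
  (collinear_iff_exists_forall_eq_smul_vadd s).2 ⟨M, v, fun p hp => by
    obtain ⟨t, rfl⟩ := h hp
    exact ⟨t, by rw [vadd_eq_add, add_comm]⟩⟩

lemma affine_coeffs_eq_zero_of_not_collinear {A B C : ℝ × ℝ}
    (hABC : ¬ Collinear ℝ ({A, B, C} : Set (ℝ × ℝ))) {α β γ : ℝ}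
    (hA : α * A.1 + β * A.2 + γ = 0) (hB : α * B.1 + β * B.2 + γ = 0)
    (hC : α * C.1 + β * C.2 + γ = 0) : α = 0 ∧ β = 0 ∧ γ = 0 := by
  by_cases hαβ : α = 0 ∧ β = 0
  · obtain ⟨rfl, rfl⟩ := hαβ
    exact ⟨rfl, rfl, by simpa using hA⟩
  refine absurd (collinear_of_subset_parmLine (M := A) (v := (-β, α)) ?_) hABC
  have hw : ((-β, α) : ℝ × ℝ) ≠ 0 := fun h =>
    hαβ ⟨congrArg Prod.snd h, neg_eq_zero.1 (congrArg Prod.fst h)⟩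
  intro z hz
  apply mem_parmLine_of_cross_eq_zero hw
  simp only [Set.mem_insert_iff, Set.mem_singleton_iff] at hz
  simp only [cross, Prod.fst_sub, Prod.snd_sub]
  rcases hz with rfl | rfl | rfl
  · ring
  · linear_combination hB - hA
  · linear_combination hC - hA

lemma cross_ne_zero_of_not_collinear {P Q R : ℝ × ℝ}
    (h : ¬ Collinear ℝ ({P, Q, R} : Set (ℝ × ℝ))) : cross (Q - P) (R - P) ≠ 0 := by
  intro h0
  obtain ⟨hα, hβ, -⟩ :=
    affine_coeffs_eq_zero_of_not_collinear h (α := -(Q.2 - P.2)) (β := Q.1 - P.1)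
    (γ := (Q.2 - P.2) * P.1 - (Q.1 - P.1) * P.2) (by ring) (by ring)
    (by simp only [cross, Prod.fst_sub, Prod.snd_sub] at h0; linear_combination h0)
  have hQP : Q = P := Prod.ext (by linarith) (by linarith)
  subst hQP
  simp [collinear_pair] at h

lemma LinearMap.range_eq_top_of_forall_exists_apply_ne_zero {ι K V : Type*} [Field K] [Fintype ι]
    [DecidableEq ι] [AddCommGroup V] [Module K V] (e : V →ₗ[K] ι → K)
    (h : ∀ i, ∃ x, e x i ≠ 0 ∧ ∀ j ≠ i, e x j = 0) : LinearMap.range e = ⊤ := by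
  rw [eq_top_iff, ← (Pi.basisFun K ι).span_eq, Submodule.span_le]
  rintro _ ⟨i, rfl⟩
  obtain ⟨x, hxi, hx⟩ := h i
  refine ⟨(e x i)⁻¹ • x, funext fun j => ?_⟩
  rcases eq_or_ne j i with rfl | hj
  · simp [hxi]
  · simp [hx j hj, hj]

lemma setOf_mul_sq_add_eq_zero_cases {a c : ℝ} (h : ¬ (a = 0 ∧ c = 0)) :
    {t : ℝ | a * t ^ 2 + c = 0} = ∅ ∨ {t : ℝ | a * t ^ 2 + c = 0} = {0} ∨
      ∃ r ≠ 0, {t : ℝ | a * t ^ 2 + c = 0} = {r, -r} := by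
  rcases eq_or_ne c 0 with rfl | hc
  · have ha : a ≠ 0 := fun ha => h ⟨ha, rfl⟩
    right; left
    ext t
    simp [ha]
  by_cases hpos : 0 < -c / a
  · have ha : a ≠ 0 := by rintro rfl; simp at hpos
    right; right
    refine ⟨√(-c / a), (Real.sqrt_pos.2 hpos).ne', ?_⟩
    ext t
    rw [Set.mem_ofPred_eq, Set.mem_insert_iff, Set.mem_singleton_iff, ← sq_eq_sq_iff_eq_or_eq_neg,
      Real.sq_sqrt hpos.le, eq_div_iff ha]
    constructor <;> intro <;> linarith
  · left
    ext t
    simp only [Set.mem_ofPred_eq, Set.mem_empty_iff_false, iff_false]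
    intro ht
    rcases eq_or_ne a 0 with rfl | ha
    · exact hc (by simpa using ht)
    have ht0 : t ≠ 0 := by rintro rfl; exact hc (by simpa using ht)
    have hct : -c / a = t ^ 2 := by rw [div_eq_iff ha]; linarith
    exact hpos (hct ▸ by positivity)

namespace Conic

def coeffs (f : Conic) : Fin 6 → ℝ := ![f.a, f.b, f.c, f.d, f.e, f.g]

def veronese (p : ℝ × ℝ) : Fin 6 → ℝ := ![p.1 ^ 2, p.1 * p.2, p.2 ^ 2, p.1, p.2, 1]

noncomputable def dirDeriv (f : Conic) (M v : ℝ × ℝ) : ℝ :=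
  2 * f.polarForm M v + f.d * v.1 + f.e * v.2

variable {f : Conic}

lemma eval_eq_veronese_dotProduct (f : Conic) (p : ℝ × ℝ) :
    f.eval p = veronese p ⬝ᵥ f.coeffs := by
  simp only [eval, veronese, coeffs, dotProduct, Fin.sum_univ_six, Matrix.cons_val]
  ring

lemma nonzero_iff_coeffs_ne_zero : f.Nonzero ↔ f.coeffs ≠ 0 := by
  simp [Nonzero, coeffs]

lemma propTo_iff {G h : Conic} : G.PropTo h ↔ ∃ k : ℝ, k • h.coeffs = G.coeffs := by
  simp [PropTo, coeffs, eq_comm]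

lemma dirDeriv_eq_dotProduct (f : Conic) (M v : ℝ × ℝ) :
    f.dirDeriv M v =
      ![2 * M.1 * v.1, M.1 * v.2 + M.2 * v.1, 2 * M.2 * v.2, v.1, v.2, 0] ⬝ᵥ f.coeffs := by
  simp only [dirDeriv, polarForm, coeffs, dotProduct, Fin.sum_univ_six, Matrix.cons_val]
  ring

lemma eval_add_smul (f : Conic) (M v : ℝ × ℝ) (t : ℝ) :
    f.eval (M + t • v) = f.polarForm v v * t ^ 2 + f.dirDeriv M v * t + f.eval M := by
  simp only [eval, dirDeriv, polarForm, Prod.fst_add, Prod.snd_add, Prod.smul_fst, Prod.smul_snd,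
    smul_eq_mul]
  ring

lemma dirDeriv_add_smul (f : Conic) (O u v : ℝ × ℝ) (s : ℝ) :
    f.dirDeriv (O + s • u) v = f.dirDeriv O v + 2 * s * f.polarForm u v := by
  simp only [dirDeriv, polarForm, Prod.fst_add, Prod.snd_add, Prod.smul_fst, Prod.smul_snd,
    smul_eq_mul]
  ring

lemma dirDeriv_eq_zero_of_eval_add_eq_eval_sub {M v : ℝ × ℝ} {t : ℝ} (ht : t ≠ 0)
    (h : f.eval (M + t • v) = f.eval (M - t • v)) : f.dirDeriv M v = 0 := by
  rw [sub_eq_add_neg, ← neg_smul, eval_add_smul, eval_add_smul] at h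
  have : (2 * t) * f.dirDeriv M v = 0 := by linear_combination h
  simpa [ht] using this

lemma IsCenter.dirDeriv_eq_zero {O : ℝ × ℝ} (hO : f.IsCenter O) (v : ℝ × ℝ) :
    f.dirDeriv O v = 0 :=
  dirDeriv_eq_zero_of_eval_add_eq_eval_sub one_ne_zero (by simpa using hO v)

lemma IsCenter.dirDeriv_add_smul_eq_zero {O u v : ℝ × ℝ} (hO : f.IsCenter O)
    (huv : f.polarForm u v = 0) (s : ℝ) : f.dirDeriv (O + s • u) v = 0 := by
  rw [dirDeriv_add_smul, hO.dirDeriv_eq_zero, huv]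
  ring

lemma dirDeriv_eq_zero_of_midpoint {M v P Q : ℝ × ℝ} (hP : P ∈ parmLine M v) (hPQ : P ≠ Q)
    (hmid : M = midpoint ℝ P Q) (hfP : f.eval P = 0) (hfQ : f.eval Q = 0) :
    f.dirDeriv M v = 0 := by
  obtain ⟨t, rfl⟩ := hP
  have hQ : Q = M - t • v := by
    rw [eq_comm, midpoint_eq_iff, AffineEquiv.pointReflection_apply] at hmid
    rw [← hmid, vsub_eq_sub, vadd_eq_add]
    abel
  refine dirDeriv_eq_zero_of_eval_add_eq_eval_sub (t := t) ?_ (by rw [← hQ, hfP, hfQ])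
  rintro rfl
  exact hPQ (by simp [hQ])

lemma not_nonzero_of_forall_eval_eq_zero (hf : ∀ z, f.eval z = 0) : ¬ f.Nonzero := by
  have h00 := hf (0, 0)
  have h10 := hf (1, 0)
  have h20 := hf (-1, 0)
  have h01 := hf (0, 1)
  have h02 := hf (0, -1)
  have h11 := hf (1, 1)
  simp only [eval] at h00 h10 h20 h01 h02 h11
  norm_num at h00 h10 h20 h01 h02 h11
  exact fun h => h ⟨by linarith, by linarith, by linarith, by linarith, by linarith, by linarith⟩

lemma exists_eval_eq_cross_mul {M v : ℝ × ℝ} (hQ : f.polarForm v v = 0)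
    (hD : f.dirDeriv M v = 0) (hM : f.eval M = 0) : ∃ α β γ : ℝ, ∀ z : ℝ × ℝ,
      (v.1 ^ 2 + v.2 ^ 2) ^ 2 * f.eval z = cross (z - M) v * (α * z.1 + β * z.2 + γ) := by
  -- With `x = cross (z - M) v` and `y = ⟪z - M, v⟫` one has `‖v‖² (z - M) = x n + y v`. Expanding
  -- `f` at `M` in this frame, the hypotheses kill the terms in `y²`, `y` and `1`, which leaves
  -- `x (x B_f(n, n) + 2 y B_f(n, v) + ‖v‖² ∂ₙf(M))`.
  let n : ℝ × ℝ := (v.2, -v.1)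
  refine ⟨v.2 * f.polarForm n n + 2 * v.1 * f.polarForm n v,
    -v.1 * f.polarForm n n + 2 * v.2 * f.polarForm n v,
    -((v.2 * f.polarForm n n + 2 * v.1 * f.polarForm n v) * M.1
      + (-v.1 * f.polarForm n n + 2 * v.2 * f.polarForm n v) * M.2)
      + (v.1 ^ 2 + v.2 ^ 2) * f.dirDeriv M n, fun z => ?_⟩
  simp only [eval, dirDeriv, polarForm] at hQ hD hM
  simp only [eval, dirDeriv, polarForm, cross, Prod.fst_sub, Prod.snd_sub, n]
  linear_combination ((z.1 - M.1) * v.1 + (z.2 - M.2) * v.2) ^ 2 * hQ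
    + (v.1 ^ 2 + v.2 ^ 2) * ((z.1 - M.1) * v.1 + (z.2 - M.2) * v.2) * hD
    + (v.1 ^ 2 + v.2 ^ 2) ^ 2 * hM

lemma exists_eval_eq_mul (α β γ α' β' γ' : ℝ) : ∃ c : Conic, ∀ z : ℝ × ℝ,
    c.eval z = (α * z.1 + β * z.2 + γ) * (α' * z.1 + β' * z.2 + γ') :=
  ⟨⟨α * α', α * β' + β * α', β * β', α * γ' + γ * α', β * γ' + γ * β', γ * γ'⟩,
    fun z => by simp only [eval]; ring⟩

lemma exists_eval_eq_zero_eval_ne_zero {P Q R S : ℝ × ℝ}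
    (hQ : ¬ Collinear ℝ ({P, Q, S} : Set (ℝ × ℝ))) (hR : ¬ Collinear ℝ ({P, R, S} : Set (ℝ × ℝ))) :
    ∃ c : Conic, c.eval P = 0 ∧ c.eval Q = 0 ∧ c.eval R = 0 ∧ c.eval S ≠ 0 := by
  obtain ⟨c, hc⟩ := exists_eval_eq_mul
    (-(Q.2 - P.2)) (Q.1 - P.1) ((Q.2 - P.2) * P.1 - (Q.1 - P.1) * P.2)
    (-(R.2 - P.2)) (R.1 - P.1) ((R.2 - P.2) * P.1 - (R.1 - P.1) * P.2)
  have hc' : ∀ z, c.eval z = cross (Q - P) (z - P) * cross (R - P) (z - P) := fun z => by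
    rw [hc]; simp only [cross, Prod.fst_sub, Prod.snd_sub]; ring
  refine ⟨c, ?_, ?_, ?_, ?_⟩
  iterate 3 · rw [hc']; simp only [cross, Prod.fst_sub, Prod.snd_sub]; ring
  · rw [hc']
    exact mul_ne_zero (cross_ne_zero_of_not_collinear hQ) (cross_ne_zero_of_not_collinear hR)

def evalAt (A B C D : ℝ × ℝ) : (Fin 6 → ℝ) →ₗ[ℝ] Fin 4 → ℝ :=
  (Matrix.of ![veronese A, veronese B, veronese C, veronese D]).mulVecLin

lemma evalAt_coeffs (A B C D : ℝ × ℝ) (f : Conic) :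
    evalAt A B C D f.coeffs = ![f.eval A, f.eval B, f.eval C, f.eval D] := by
  ext i
  fin_cases i <;> simp [evalAt, Matrix.mulVec, eval_eq_veronese_dotProduct]

def conicsThrough (A B C D : ℝ × ℝ) : Submodule ℝ (Fin 6 → ℝ) :=
  LinearMap.ker (evalAt A B C D)

lemma coeffs_mem_conicsThrough {A B C D : ℝ × ℝ} :
    f.coeffs ∈ conicsThrough A B C D ↔ f.Through A B C D := by
  simp [conicsThrough, evalAt_coeffs, Through]

lemma finrank_conicsThrough {A B C D : ℝ × ℝ} (hgen : NoThreeCollinear A B C D) :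
    Module.finrank ℝ (conicsThrough A B C D) = 2 := by
  obtain ⟨hABC, hABD, hACD, -⟩ := hgen
  have hrange : LinearMap.range (evalAt A B C D) = ⊤ := by
    refine LinearMap.range_eq_top_of_forall_exists_apply_ne_zero _ fun i => ?_
    obtain ⟨c, hc⟩ : ∃ c : Conic, ![c.eval A, c.eval B, c.eval C, c.eval D] i ≠ 0 ∧
        ∀ j ≠ i, ![c.eval A, c.eval B, c.eval C, c.eval D] j = 0 := by
      fin_cases i
      · obtain ⟨c, hB, hC, hD, hA⟩ :=
          exists_eval_eq_zero_eval_ne_zero (P := B) (Q := C) (R := D) (S := A)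
          (by rwa [Set.pair_comm C A, Set.insert_comm B A])
          (by rwa [Set.pair_comm D A, Set.insert_comm B A])
        exact ⟨c, by simpa using hA, fun j hj => by fin_cases j <;> simp_all⟩
      · obtain ⟨c, hA, hC, hD, hB⟩ :=
          exists_eval_eq_zero_eval_ne_zero (P := A) (Q := C) (R := D) (S := B)
          (by rwa [Set.pair_comm C B]) (by rwa [Set.pair_comm D B])
        exact ⟨c, by simpa using hB, fun j hj => by fin_cases j <;> simp_all⟩
      · obtain ⟨c, hA, hB, hD, hC⟩ :=
          exists_eval_eq_zero_eval_ne_zero (P := A) (Q := B) (R := D) (S := C)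
          hABC (by rwa [Set.pair_comm D C])
        exact ⟨c, by simpa using hC, fun j hj => by fin_cases j <;> simp_all⟩
      · obtain ⟨c, hA, hB, hC, hD⟩ :=
          exists_eval_eq_zero_eval_ne_zero (P := A) (Q := B) (R := C) (S := D)
          hABD hACD
        exact ⟨c, by simpa using hD, fun j hj => by fin_cases j <;> simp_all⟩
    exact ⟨c.coeffs, by rwa [evalAt_coeffs]⟩
  have := LinearMap.finrank_range_add_finrank_ker (evalAt A B C D)
  rw [hrange, finrank_top] at this
  simp only [Module.finrank_fin_fun] at this
  unfold conicsThrough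
  omega

theorem exists_smul_add_smul_eq_coeffs {A B C D : ℝ × ℝ} (hgen : NoThreeCollinear A B C D)
    {h G : Conic} (hh0 : h.Nonzero) (hGh : ¬ G.PropTo h) (hh : h.Through A B C D)
    (hG : G.Through A B C D) (hf : f.Through A B C D) :
    ∃ l m : ℝ, l • h.coeffs + m • G.coeffs = f.coeffs := by
  have hli : LinearIndependent ℝ ![h.coeffs, G.coeffs] :=
    (LinearIndependent.pair_iff' (nonzero_iff_coeffs_ne_zero.1 hh0)).2
      fun k hk => hGh (propTo_iff.2 ⟨k, hk⟩)
  have hspan : Submodule.span ℝ (Set.range ![h.coeffs, G.coeffs]) = conicsThrough A B C D := by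
    refine Submodule.eq_of_le_of_finrank_eq (Submodule.span_le.2 ?_) ?_
    · rintro _ ⟨i, rfl⟩
      fin_cases i
      · exact coeffs_mem_conicsThrough.2 hh
      · exact coeffs_mem_conicsThrough.2 hG
    · rw [finrank_span_eq_card hli, finrank_conicsThrough hgen, Fintype.card_fin]
  have hmem := coeffs_mem_conicsThrough.2 hf
  rw [← hspan, Submodule.mem_span_range_iff_exists_fun] at hmem
  obtain ⟨c, hc⟩ := hmem
  exact ⟨c 0, c 1, by simpa [Fin.sum_univ_two] using hc⟩

lemma dirDeriv_eq_of_smul_add_smul_eq_coeffs {h G : Conic} {l m : ℝ}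
    (hlm : l • h.coeffs + m • G.coeffs = f.coeffs) (M v : ℝ × ℝ) :
    f.dirDeriv M v = l * h.dirDeriv M v + m * G.dirDeriv M v := by
  simp only [dirDeriv_eq_dotProduct, ← hlm, dotProduct_add, dotProduct_smul, smul_eq_mul]

theorem not_nonzero_of_eval_parmLine_eq_zero {A B C M v : ℝ × ℝ} (hv : v ≠ 0)
    (hℓ : ∀ p ∈ parmLine M v, f.eval p = 0) (hABC : ¬ Collinear ℝ ({A, B, C} : Set (ℝ × ℝ)))
    (hA : f.eval A = 0) (hB : f.eval B = 0) (hC : f.eval C = 0)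
    (hAl : A ∉ parmLine M v) (hBl : B ∉ parmLine M v) (hCl : C ∉ parmLine M v) :
    ¬ f.Nonzero := by
  have hline (t : ℝ) := hℓ (M + t • v) ⟨t, rfl⟩
  have hM : f.eval M = 0 := by simpa using hline 0
  have h₁ := hline 1
  have h₂ := hline (-1)
  rw [eval_add_smul, hM] at h₁ h₂
  obtain ⟨α, β, γ, hfac⟩ := exists_eval_eq_cross_mul (f := f) (M := M) (v := v)
    (by linear_combination (h₁ + h₂) / 2) (by linear_combination (h₁ - h₂) / 2) hM
  have hoff : ∀ z, f.eval z = 0 → z ∉ parmLine M v → α * z.1 + β * z.2 + γ = 0 := by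
    intro z hz hzl
    have hz' := hfac z
    rw [hz, mul_zero, eq_comm] at hz'
    exact (mul_eq_zero.1 hz').resolve_left fun h => hzl (mem_parmLine_of_cross_eq_zero hv h)
  obtain ⟨rfl, rfl, rfl⟩ :=
    affine_coeffs_eq_zero_of_not_collinear hABC (hoff A hA hAl) (hoff B hB hBl) (hoff C hC hCl)
  refine not_nonzero_of_forall_eval_eq_zero fun z => ?_
  simpa [sq_add_sq_ne_zero_of_ne_zero hv] using hfac z

theorem sep_parmLine_eq_empty_or_singleton_or_pair {M v : ℝ × ℝ} (hv : v ≠ 0)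
    (hD : f.dirDeriv M v = 0) (hf : ¬ (f.polarForm v v = 0 ∧ f.eval M = 0)) :
    {p ∈ parmLine M v | f.eval p = 0} = ∅ ∨ {p ∈ parmLine M v | f.eval p = 0} = {M} ∨
      ∃ X Y : ℝ × ℝ, X ≠ Y ∧ M = midpoint ℝ X Y ∧
        {p ∈ parmLine M v | f.eval p = 0} = {X, Y} := by
  have himage : {p ∈ parmLine M v | f.eval p = 0} =
      (fun t : ℝ => M + t • v) '' {t | f.polarForm v v * t ^ 2 + f.eval M = 0} := by
    ext p
    constructor
    · rintro ⟨⟨t, rfl⟩, hp⟩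
      exact ⟨t, by simpa [f.eval_add_smul, hD] using hp, rfl⟩
    · rintro ⟨t, ht, rfl⟩
      exact ⟨⟨t, rfl⟩, by simpa [f.eval_add_smul, hD] using ht⟩
  rw [himage]
  rcases setOf_mul_sq_add_eq_zero_cases hf with h | h | ⟨r, hr, h⟩ <;> rw [h]
  · simp
  · simp
  · refine Or.inr (Or.inr ⟨M + r • v, M - r • v, ?_, (midpoint_add_sub ℝ M (r • v)).symm, ?_⟩)
    · intro hXY
      have : (2 * r) • v = 0 := by
        rw [two_mul, add_smul]; linear_combination (norm := module) hXY
      simp_all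
    · rw [Set.image_pair, neg_smul, ← sub_eq_add_neg]

end Conic

theorem cerin_butterfly_general
    (A B C D : ℝ × ℝ) (hgen : NoThreeCollinear A B C D)
    (h : Conic) (hh0 : h.Nonzero) (hh : h.Through A B C D)
    (O : ℝ × ℝ) (hO : h.IsCenter O)
    (u : ℝ × ℝ) (hu : u ≠ 0)
    (haxis : h.polarForm u (-u.2, u.1) = 0)
    (s : ℝ) (M : ℝ × ℝ) (hM : M = O + s • u)
    (hAl : A ∉ parmLine M (-u.2, u.1)) (hBl : B ∉ parmLine M (-u.2, u.1))
    (hCl : C ∉ parmLine M (-u.2, u.1))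
    (G : Conic) (hG : G.Through A B C D)
    (hGh : ¬ G.PropTo h)
    (P Q : ℝ × ℝ) (hPQ : P ≠ Q)
    (hGl : {p ∈ parmLine M (-u.2, u.1) | G.eval p = 0} = {P, Q})
    (hmid : M = midpoint ℝ P Q) :
    ∀ f : Conic, f.Nonzero → f.Through A B C D →
      {p ∈ parmLine M (-u.2, u.1) | f.eval p = 0} = ∅ ∨
      {p ∈ parmLine M (-u.2, u.1) | f.eval p = 0} = {M} ∨
      ∃ X Y : ℝ × ℝ, X ≠ Y ∧ M = midpoint ℝ X Y ∧
        {p ∈ parmLine M (-u.2, u.1) | f.eval p = 0} = {X, Y} := by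
  intro f hf0 hf
  have hv : ((-u.2, u.1) : ℝ × ℝ) ≠ 0 := by
    contrapose! hu
    simp_all [Prod.ext_iff]
  have hDh : h.dirDeriv M (-u.2, u.1) = 0 := hM ▸ hO.dirDeriv_add_smul_eq_zero haxis s
  have hP : P ∈ {p ∈ parmLine M (-u.2, u.1) | G.eval p = 0} := hGl ▸ Set.mem_insert P {Q}
  have hQ : Q ∈ {p ∈ parmLine M (-u.2, u.1) | G.eval p = 0} := hGl ▸ Set.mem_insert_of_mem P rfl
  have hDG := Conic.dirDeriv_eq_zero_of_midpoint hP.1 hPQ hmid hP.2 hQ.2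
  obtain ⟨l, m, hlm⟩ := Conic.exists_smul_add_smul_eq_coeffs hgen hh0 hGh hh hG hf
  have hDf : f.dirDeriv M (-u.2, u.1) = 0 := by
    rw [Conic.dirDeriv_eq_of_smul_add_smul_eq_coeffs hlm, hDh, hDG]
    ring
  refine f.sep_parmLine_eq_empty_or_singleton_or_pair hv hDf fun ⟨hfv, hfM⟩ => ?_
  refine Conic.not_nonzero_of_eval_parmLine_eq_zero hv ?_ hgen.1 hf.1 hf.2.1 hf.2.2.1
    hAl hBl hCl hf0
  rintro _ ⟨t, rfl⟩
  rw [Conic.eval_add_smul, hfv, hDf, hfM]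
  ring

/-- **Čerin's generalization of the butterfly theorem.** Let `h` be a conic
through the four base points with center `O` and an axis with direction `u`
(i.e. `B_h(u, u⊥) = 0`), and let `ℓ` be the line through a point `M = O + s·u` of
the axis perpendicular to it. If some other conic through the four base points
meets `ℓ` in exactly two points with midpoint `M`, then every conic through the
four base points meets `ℓ` either not at all, or exactly at `M`, or exactly in a
pair of distinct points whose midpoint is `M`. -/
theorem cerin_butterfly
    (A B C D : ℝ × ℝ) (hgen : NoThreeCollinear A B C D)
    (h : Conic) (hh0 : h.Nonzero) (hh : h.Through A B C D)
    (O : ℝ × ℝ) (hO : h.IsCenter O)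
    (u : ℝ × ℝ) (hu : u ≠ 0)
    (haxis : h.polarForm u (-u.2, u.1) = 0)
    (s : ℝ) (M : ℝ × ℝ) (hM : M = O + s • u)
    (hAl : A ∉ parmLine M (-u.2, u.1)) (hBl : B ∉ parmLine M (-u.2, u.1))
    (hCl : C ∉ parmLine M (-u.2, u.1)) (hDl : D ∉ parmLine M (-u.2, u.1))
    (G : Conic) (hG0 : G.Nonzero) (hG : G.Through A B C D)
    (hGh : ¬ G.PropTo h)
    (P Q : ℝ × ℝ) (hPQ : P ≠ Q)
    (hGl : {p ∈ parmLine M (-u.2, u.1) | G.eval p = 0} = {P, Q})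
    (hmid : M = midpoint ℝ P Q) :
    ∀ f : Conic, f.Nonzero → f.Through A B C D →
      {p ∈ parmLine M (-u.2, u.1) | f.eval p = 0} = ∅ ∨
      {p ∈ parmLine M (-u.2, u.1) | f.eval p = 0} = {M} ∨
      ∃ X Y : ℝ × ℝ, X ≠ Y ∧ M = midpoint ℝ X Y ∧
        {p ∈ parmLine M (-u.2, u.1) | f.eval p = 0} = {X, Y} :=
  cerin_butterfly_general A B C D hgen h hh0 hh O hO u hu haxis s M hM hAl hBl hCl G hG hGh P Q hPQ
    hGl hmid
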